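/- For every a : ZMod d × ZMod d → ℂ with Σ_{r,s} |a_{r,s}|² = 1, the operator P_a commutes with the covariance representation: P_a · (U_{p,q} ⊗ U_{p,q} ⊗ conj(U_{p,q})) = (U_{p,q} ⊗ U_{p,q} ⊗ conj(U_{p,q})) · P_a for all p, q ∈ ZMod d. -/

import Mathlib

open Matrix Kronecker BigOperators

/-- ω = exp(2πi/d). -/
noncomputable def omega (d : ℕ) : ℂ := Complex.exp (2 * Real.pi * Complex.I / d)

/-- The Weyl–Heisenberg matrix `U_{p,q}`. -/
noncomputable def WH (d : ℕ) [NeZero d] (p q : ZMod d) : Matrix (ZMod d) (ZMod d) ℂ :=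
  fun j k => if j = k + p then omega d ^ (q.val * k.val) else 0

/-- The operator `P_a` on `(ℂ^d)^⊗3` associated to the coefficients `a`:
`(P_a)_{(i,j,k),(i',j',k')} = (1/d) Σ_{r,s,r',s'} a_{rs} conj(a_{r's'})
  (U_{rs}ᴴ U_{r's'})_{i,i'} (U_{rs})_{j,k} conj((U_{r's'})_{j',k'})`. -/
noncomputable def Pa (d : ℕ) [NeZero d] (a : ZMod d × ZMod d → ℂ) :
    Matrix (ZMod d × ZMod d × ZMod d) (ZMod d × ZMod d × ZMod d) ℂ :=
  fun x y => (d : ℂ)⁻¹ * ∑ r : ZMod d, ∑ s : ZMod d, ∑ r' : ZMod d, ∑ s' : ZMod d,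
    a (r, s) * (starRingEnd ℂ) (a (r', s')) * ((WH d r s)ᴴ * WH d r' s') x.1 y.1 *
      WH d r s x.2.1 x.2.2 * (starRingEnd ℂ) (WH d r' s' y.2.1 y.2.2)

/-! Write `|A⟩` for the row-major vectorization of a matrix `A`. Then
`P_a = d⁻¹ Σ a_{rs} conj(a_{r's'}) (U_{rs}ᴴ U_{r's'}) ⊗ |U_{rs}⟩⟨U_{r's'}|`, and since
`(V ⊗ conj V) |A⟩ = |V A Vᴴ⟩`, conjugating `(Aᴴ B) ⊗ |A⟩⟨B|` by the unitary `V ⊗ V ⊗ conj V` just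
replaces `A, B` by `V A Vᴴ, V B Vᴴ`. For `V = U_{p,q}` the Weyl commutation relation makes this
conjugation multiply each `U_{r,s}` by a root of unity, which cancels against its conjugate coming
from `U_{r,s}ᴴ`, so `P_a` is invariant under this unitary conjugation.
-/

namespace Matrix

variable {n R : Type*} [Fintype n] [CommRing R] [StarRing R]

/-- Mathlib's `vec` stacks columns, so `vec Aᵀ` is the row-major vectorization `(j, k) ↦ A j k`. -/
def conjMulKroneckerOuter (A B : Matrix n n R) : Matrix (n × n × n) (n × n × n) R :=
  (Aᴴ * B) ⊗ₖ vecMulVec (vec Aᵀ) (star (vec Bᵀ))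

theorem kronecker_map_star_mulVec_vec_transpose (U X : Matrix n n R) :
    (U ⊗ₖ U.map (starRingEnd R)) *ᵥ vec Xᵀ = vec (U * X * Uᴴ)ᵀ := by
  rw [kronecker_mulVec_vec, transpose_mul, transpose_mul, ← Matrix.mul_assoc]
  rfl

theorem kronecker_mul_conjMulKroneckerOuter_mul_conjTranspose [DecidableEq n] {U : Matrix n n R}
    (hU : Uᴴ * U = 1) (A B : Matrix n n R) :
    (U ⊗ₖ (U ⊗ₖ U.map (starRingEnd R))) * conjMulKroneckerOuter A B *
        (U ⊗ₖ (U ⊗ₖ U.map (starRingEnd R)))ᴴ =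
      conjMulKroneckerOuter (U * A * Uᴴ) (U * B * Uᴴ) := by
  have hcongr : U * (Aᴴ * B) * Uᴴ = (U * A * Uᴴ)ᴴ * (U * B * Uᴴ) := by
    simp only [conjTranspose_mul, conjTranspose_conjTranspose, Matrix.mul_assoc]
    rw [← Matrix.mul_assoc Uᴴ U, hU, Matrix.one_mul]
  rw [conjTranspose_kronecker, conjMulKroneckerOuter, conjMulKroneckerOuter, ← mul_kronecker_mul,
    ← mul_kronecker_mul, mul_vecMulVec, vecMulVec_mul, ← star_mulVec,
    kronecker_map_star_mulVec_vec_transpose, kronecker_map_star_mulVec_vec_transpose, hcongr]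

theorem conjMulKroneckerOuter_smul_smul {α β : R} (hα : star α * α = 1) (hβ : star β * β = 1)
    (A B : Matrix n n R) : conjMulKroneckerOuter (α • A) (β • B) = conjMulKroneckerOuter A B := by
  have hαβ : α * star β * (star α * β) = 1 := by
    rw [mul_mul_mul_comm, mul_comm α, hα, hβ, one_mul]
  rw [conjMulKroneckerOuter, conjMulKroneckerOuter, conjTranspose_smul, transpose_smul,
    transpose_smul, vec_smul, vec_smul, star_smul, smul_vecMulVec, vecMulVec_smul,
    smul_mul_smul_comm]
  simp only [smul_kronecker, kronecker_smul, smul_smul]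
  rw [hαβ, one_smul]

theorem conjTranspose_mul_self_kronecker [DecidableEq n] {U : Matrix n n R} (hU : Uᴴ * U = 1) :
    (U ⊗ₖ (U ⊗ₖ U.map (starRingEnd R)))ᴴ * (U ⊗ₖ (U ⊗ₖ U.map (starRingEnd R))) = 1 := by
  rw [conjTranspose_kronecker, conjTranspose_kronecker, ← mul_kronecker_mul, ← mul_kronecker_mul,
    ← conjTranspose_map (starRingEnd R) fun _ => rfl, ← Matrix.map_mul, hU,
    Matrix.map_one _ (map_zero _) (map_one _), one_kronecker_one, one_kronecker_one]

end Matrix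

open ZMod

theorem omega_pow (d : ℕ) [NeZero d] (m : ℕ) : omega d ^ m = stdAddChar (m : ZMod d) := by
  have h := stdAddChar_coe (N := d) m
  push_cast at h
  rw [h, omega, ← Complex.exp_nat_mul]
  ring_nf

theorem WH_apply (d : ℕ) [NeZero d] (p q j k : ZMod d) :
    WH d p q j k = if j = k + p then stdAddChar (q * k) else 0 := by
  rw [WH, omega_pow]
  push_cast
  simp only [natCast_val, cast_id', id]

theorem WH_mul_WH (d : ℕ) [NeZero d] (p q r s : ZMod d) :
    WH d p q * WH d r s = stdAddChar (q * r) • WH d (p + r) (q + s) := by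
  ext j l
  have hsummand : ∀ k, WH d p q j k * WH d r s k l =
      if k = l + r then WH d p q j (l + r) * stdAddChar (s * l) else 0 := by
    intro k
    rw [WH_apply d r s k l]
    split_ifs with hk <;> simp [hk]
  rw [mul_apply, Finset.sum_congr rfl fun k _ => hsummand k, Finset.sum_ite_eq' Finset.univ,
    if_pos (Finset.mem_univ _), Matrix.smul_apply, WH_apply, WH_apply, add_comm p r, ← add_assoc,
    smul_eq_mul]
  split_ifs
  · rw [← AddChar.map_add_eq_mul, ← AddChar.map_add_eq_mul]
    ring_nf
  · simp

theorem WH_zero_zero (d : ℕ) [NeZero d] : WH d 0 0 = 1 := by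
  ext j k
  simp [WH_apply, one_apply]

theorem conjTranspose_WH (d : ℕ) [NeZero d] (p q : ZMod d) :
    (WH d p q)ᴴ = stdAddChar (q * p) • WH d (-p) (-q) := by
  ext j k
  rw [conjTranspose_apply, Matrix.smul_apply, WH_apply, WH_apply, smul_eq_mul]
  by_cases h : k = j + p
  · rw [if_pos h, if_pos (by rw [h]; ring), ← starRingEnd_apply, ← AddChar.map_neg_eq_conj,
      ← AddChar.map_add_eq_mul]
    congr 1
    rw [h]; ring
  · rw [if_neg h, if_neg (by rintro rfl; exact h (by ring)), star_zero, mul_zero]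

theorem conjTranspose_WH_mul_WH (d : ℕ) [NeZero d] (p q : ZMod d) :
    (WH d p q)ᴴ * WH d p q = 1 := by
  rw [conjTranspose_WH, smul_mul_assoc, WH_mul_WH, smul_smul, ← AddChar.map_add_eq_mul,
    neg_add_cancel, neg_add_cancel, WH_zero_zero]
  simp

theorem WH_mul_WH_mul_conjTranspose (d : ℕ) [NeZero d] (p q r s : ZMod d) :
    WH d p q * WH d r s * (WH d p q)ᴴ = stdAddChar (q * r - s * p) • WH d r s := by
  have weyl : WH d p q * WH d r s = stdAddChar (q * r - s * p) • (WH d r s * WH d p q) := by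
    rw [WH_mul_WH, WH_mul_WH, smul_smul, ← AddChar.map_add_eq_mul, sub_add_cancel, add_comm p,
      add_comm q]
  rw [weyl, smul_mul_assoc, Matrix.mul_assoc, mul_eq_one_comm.mp (conjTranspose_WH_mul_WH d p q),
    Matrix.mul_one]

theorem Pa_eq_sum (d : ℕ) [NeZero d] (a : ZMod d × ZMod d → ℂ) :
    Pa d a = (d : ℂ)⁻¹ • ∑ r : ZMod d, ∑ s : ZMod d, ∑ r' : ZMod d, ∑ s' : ZMod d,
      (a (r, s) * starRingEnd ℂ (a (r', s'))) • conjMulKroneckerOuter (WH d r s) (WH d r' s') := by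
  ext x y
  simp only [Pa, conjMulKroneckerOuter, Matrix.smul_apply, Matrix.sum_apply, kroneckerMap_apply,
    vecMulVec_apply, vec, transpose_apply, Pi.star_apply, smul_eq_mul, starRingEnd_apply]
  congr 1
  refine Finset.sum_congr rfl fun r _ => Finset.sum_congr rfl fun s _ =>
    Finset.sum_congr rfl fun r' _ => Finset.sum_congr rfl fun s' _ => ?_
  ring

theorem WH_kronecker_mul_Pa_mul_conjTranspose (d : ℕ) [NeZero d] (a : ZMod d × ZMod d → ℂ)
    (p q : ZMod d) :
    (WH d p q ⊗ₖ (WH d p q ⊗ₖ (WH d p q).map (starRingEnd ℂ))) * Pa d a *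
        (WH d p q ⊗ₖ (WH d p q ⊗ₖ (WH d p q).map (starRingEnd ℂ)))ᴴ = Pa d a := by
  have hphase (x : ZMod d) : star (stdAddChar x) * stdAddChar x = 1 := by
    rw [← starRingEnd_apply, ← AddChar.map_neg_eq_conj, ← AddChar.map_add_eq_mul, neg_add_cancel,
      AddChar.map_zero_eq_one]
  rw [Pa_eq_sum]
  simp only [Matrix.mul_smul, Matrix.smul_mul, Finset.mul_sum, Finset.sum_mul,
    kronecker_mul_conjMulKroneckerOuter_mul_conjTranspose (conjTranspose_WH_mul_WH d p q),
    WH_mul_WH_mul_conjTranspose, conjMulKroneckerOuter_smul_smul (hphase _) (hphase _)]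

theorem Pa_covariant_general (d : ℕ) [NeZero d] (a : ZMod d × ZMod d → ℂ) :
    ∀ p q : ZMod d,
      Pa d a * (WH d p q ⊗ₖ (WH d p q ⊗ₖ (WH d p q).map (starRingEnd ℂ))) =
        (WH d p q ⊗ₖ (WH d p q ⊗ₖ (WH d p q).map (starRingEnd ℂ))) * Pa d a := by
  intro p q
  set V := WH d p q ⊗ₖ (WH d p q ⊗ₖ (WH d p q).map (starRingEnd ℂ))
  have hV : Vᴴ * V = 1 := conjTranspose_mul_self_kronecker (conjTranspose_WH_mul_WH d p q)
  calc Pa d a * V = V * Pa d a * Vᴴ * V := by rw [WH_kronecker_mul_Pa_mul_conjTranspose]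
    _ = V * Pa d a := by rw [Matrix.mul_assoc, hV, Matrix.mul_one]

/-- For normalized coefficients `a`, the operator `P_a` commutes with the covariance
representation `U_{p,q} ⊗ U_{p,q} ⊗ conj(U_{p,q})`. -/
theorem Pa_covariant (d : ℕ) [NeZero d] (a : ZMod d × ZMod d → ℂ)
    (ha : ∑ rs : ZMod d × ZMod d, ‖a rs‖ ^ 2 = 1) :
    ∀ p q : ZMod d,
      Pa d a * (WH d p q ⊗ₖ (WH d p q ⊗ₖ (WH d p q).map (starRingEnd ℂ))) =
        (WH d p q ⊗ₖ (WH d p q ⊗ₖ (WH d p q).map (starRingEnd ℂ))) * Pa d a :=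
  Pa_covariant_general d a
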